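/- If F : ℝ^n → ℝ^n is continuously differentiable and a residual F_i depends only on variables with indices in a set S_i (i.e., ∂F_i/∂x_j = 0 for j ∉ S_i), then each row i of the Jacobian has support contained in S_i, and the secant system restricted to columns in S_i has the true Jacobian row as an approximate solution with error O(max_ℓ ‖x^k - x^{k-ℓ}‖²) when F is twice continuously differentiable. -/

import Mathlib

/-!
If `F i` does not change when `x j` is updated, it is constant along the line `x + t • eⱼ`, so
`∂ⱼ F i = 0`; hence the secant sum over `S i` is the full row `DF(xₖ)(xₖ - xₚ)` of the Jacobian.
The error is then the first-order Taylor remainder of `F` at `xₖ`. Since `DF` is Lipschitz near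
`a` with some constant `K`, the mean value inequality applied to `F - DF(xₖ)` along the segment
`[xₚ, xₖ]` bounds it by `K ‖xₖ - xₚ‖²`.
-/

open Filter Topology

section LineDerivative

variable {𝕜 E G : Type*} [NontriviallyNormedField 𝕜] [NormedAddCommGroup E] [NormedSpace 𝕜 E]
  [NormedAddCommGroup G] [NormedSpace 𝕜 G]

-- No differentiability is needed: where `f` is not differentiable, `fderiv` is the junk value `0`.
theorem fderiv_apply_eq_zero_of_forall_add_smul {f : E → G} {x v : E}
    (hf : ∀ t : 𝕜, f (x + t • v) = f x) : fderiv 𝕜 f x v = 0 := by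
  by_cases hd : DifferentiableAt 𝕜 f x
  · rw [← hd.lineDeriv_eq_fderiv, lineDeriv]
    simp [hf]
  · simp [fderiv_zero_of_not_differentiableAt hd]

theorem fderiv_apply_single_eq_zero_of_forall_update {ι : Type*} [Fintype ι] [DecidableEq ι]
    {f : (ι → 𝕜) → G} {j : ι} (hf : ∀ (x : ι → 𝕜) (t : 𝕜), f (Function.update x j t) = f x)
    (x : ι → 𝕜) : fderiv 𝕜 f x (Pi.single j 1) = 0 :=
  fderiv_apply_eq_zero_of_forall_add_smul fun t => by
    rw [← hf x (x j + t)]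
    congr 1
    ext k
    rcases eq_or_ne k j with rfl | hk
    · simp
    · simp [hk]

end LineDerivative

theorem ContinuousLinearMap.sum_apply_single_mul {R ι : Type*} [CommSemiring R]
    [TopologicalSpace R] [Fintype ι] [DecidableEq ι] (L : (ι → R) →L[R] R) (v : ι → R) :
    ∑ j, L (Pi.single j 1) * v j = L v := by
  conv_rhs => rw [← Finset.univ_sum_single v, map_sum]
  refine Finset.sum_congr rfl fun j _ => ?_
  rw [mul_comm, ← smul_eq_mul, ← map_smul, ← Pi.single_smul, smul_eq_mul, mul_one]

theorem ContDiffAt.exists_norm_sub_sub_fderiv_le_sq {E G : Type*} [NormedAddCommGroup E]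
    [NormedSpace ℝ E] [NormedAddCommGroup G] [NormedSpace ℝ G] {f : E → G} {a : E}
    (hf : ContDiffAt ℝ 2 f a) :
    ∃ C > 0, ∃ ε > 0, ∀ x ∈ Metric.ball a ε, ∀ y ∈ Metric.ball a ε,
      ‖f x - f y - fderiv ℝ f x (x - y)‖ ≤ C * ‖x - y‖ ^ 2 := by
  obtain ⟨K, s, hs, hK⟩ := (hf.fderiv_right (m := 1) le_rfl).exists_lipschitzOnWith
  have hdiff : ∀ᶠ y in 𝓝 a, DifferentiableAt ℝ f y :=
    (hf.eventually (by simp)).mono fun y hy => hy.differentiableAt (by simp)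
  obtain ⟨ε, hε, hball⟩ := Metric.mem_nhds_iff.mp (inter_mem hs hdiff)
  refine ⟨K + 1, by positivity, ε, hε, fun x hx y hy => ?_⟩
  have hseg : segment ℝ y x ⊆ Metric.ball a ε := (convex_ball a ε).segment_subset hy hx
  have bound : ∀ z ∈ segment ℝ y x, ‖fderiv ℝ f z - fderiv ℝ f x‖ ≤ K * ‖x - y‖ := by
    intro z hz
    calc ‖fderiv ℝ f z - fderiv ℝ f x‖ ≤ K * ‖z - x‖ :=
          hK.norm_sub_le (hball (hseg hz)).1 (hball hx).1
      _ ≤ K * ‖x - y‖ := by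
          gcongr
          simpa [dist_eq_norm, norm_sub_rev] using segment_subset_closedBall_right y x hz
  calc ‖f x - f y - fderiv ℝ f x (x - y)‖ ≤ K * ‖x - y‖ * ‖x - y‖ :=
        (convex_segment y x).norm_image_sub_le_of_norm_fderiv_le'
          (fun z hz => (hball (hseg hz)).2) bound (left_mem_segment ℝ y x)
          (right_mem_segment ℝ y x)
    _ ≤ (K + 1) * ‖x - y‖ ^ 2 := by nlinarith [sq_nonneg ‖x - y‖]

theorem sparse_jacobian_secant_approx {n : ℕ}
    (F : (Fin n → ℝ) → (Fin n → ℝ)) (hF : ContDiff ℝ 2 F)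
    (S : Fin n → Finset (Fin n))
    (hS : ∀ (i j : Fin n), j ∉ S i → ∀ (x : Fin n → ℝ) (t : ℝ),
      F (Function.update x j t) i = F x i) :
    (∀ (i j : Fin n), j ∉ S i → ∀ x : Fin n → ℝ,
      fderiv ℝ (fun y => F y i) x (Pi.single j 1) = 0) ∧
    (∀ a : Fin n → ℝ, ∃ C > 0, ∃ ε > 0,
      ∀ xk xp : Fin n → ℝ, xk ∈ Metric.ball a ε → xp ∈ Metric.ball a ε →
        ∀ i : Fin n,
          |F xk i - F xp i -
            ∑ j ∈ S i, fderiv ℝ (fun y => F y i) xk (Pi.single j 1) * (xk j - xp j)|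
          ≤ C * ‖xk - xp‖ ^ 2) := by
  have hsparse : ∀ (i j : Fin n), j ∉ S i → ∀ x : Fin n → ℝ,
      fderiv ℝ (fun y => F y i) x (Pi.single j 1) = 0 :=
    fun i j hj => fderiv_apply_single_eq_zero_of_forall_update (hS i j hj)
  refine ⟨hsparse, fun a => ?_⟩
  obtain ⟨C, hC, ε, hε, htaylor⟩ := (hF.contDiffAt (x := a)).exists_norm_sub_sub_fderiv_le_sq
  refine ⟨C, hC, ε, hε, fun xk xp hxk hxp i => ?_⟩
  have hrow : ∑ j ∈ S i, fderiv ℝ (fun y => F y i) xk (Pi.single j 1) * (xk j - xp j)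
      = fderiv ℝ F xk (xk - xp) i := by
    rw [Finset.sum_subset (S i).subset_univ fun j _ hj => by rw [hsparse i j hj, zero_mul]]
    refine ((fderiv ℝ (fun y => F y i) xk).sum_apply_single_mul (xk - xp)).trans ?_
    rw [fderiv_apply (hF.differentiable two_ne_zero xk)]
    rfl
  rw [hrow]
  exact (norm_le_pi_norm (F xk - F xp - fderiv ℝ F xk (xk - xp)) i).trans (htaylor xk hxk xp hxp)
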